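/- Let D be a strongly connected balanced bipartite digraph of order 2a with a ≥ 2 satisfying d(u)+d(v) ≥ 3a+1 for every dominating pair {u,v}. If D is non-Hamiltonian, then d(u) ≥ a+1 for every vertex u of D. -/

import Mathlib

open Finset Function

variable {V : Type*}

/-- Out-degree of a vertex in a digraph given by arc relation `A`. -/
noncomputable def outDeg (A : V → V → Prop) (u : V) : ℕ := {v | A u v}.ncard

/-- In-degree of a vertex. -/
noncomputable def inDeg (A : V → V → Prop) (u : V) : ℕ := {v | A v u}.ncard

/-- Degree `d(u) = d⁺(u) + d⁻(u)`. -/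
noncomputable def deg (A : V → V → Prop) (u : V) : ℕ := outDeg A u + inDeg A u

/-- Strong connectedness: a directed path between every ordered pair of vertices. -/
def StronglyConnected (A : V → V → Prop) : Prop :=
  ∀ u v : V, Relation.ReflTransGen A u v

/-- `X, Y` form a bipartition of the digraph `A`. -/
def IsBipartition (A : V → V → Prop) (X Y : Set V) : Prop :=
  Disjoint X Y ∧ X ∪ Y = Set.univ ∧
    ∀ u v, A u v → (u ∈ X ∧ v ∈ Y) ∨ (u ∈ Y ∧ v ∈ X)

/-- `{u,v}` is a dominating pair: a common out-neighbour exists. -/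
def IsDominatingPair (A : V → V → Prop) (u v : V) : Prop :=
  u ≠ v ∧ ∃ w, A u w ∧ A v w

/-- `{u,v}` is a dominated pair: a common in-neighbour exists. -/
def IsDominatedPair (A : V → V → Prop) (u v : V) : Prop :=
  u ≠ v ∧ ∃ w, A w u ∧ A w v

/-- The digraph contains a directed cycle of length `l`. -/
def HasCycleOfLength (A : V → V → Prop) (l : ℕ) : Prop :=
  ∃ f : ZMod l → V, Function.Injective f ∧ ∀ i, A (f i) (f (i + 1))

/-- The digraph contains a Hamiltonian (directed) cycle. -/
def IsHamiltonian [Fintype V] (A : V → V → Prop) : Prop :=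
  ∃ f : ZMod (Fintype.card V) ≃ V, ∀ i, A (f i) (f (i + 1))

/-- The digraph is exactly one directed cycle through all its vertices. -/
def IsDirectedCycleDigraph [Fintype V] (A : V → V → Prop) : Prop :=
  ∃ f : ZMod (Fintype.card V) ≃ V, ∀ u v, A u v ↔ ∃ i, u = f i ∧ v = f (i + 1)

/-- A balanced bipartite digraph of order `2a` is bipancyclic: it has cycles of
all even lengths `2, 4, …, 2a`. -/
def Bipancyclic [Fintype V] (A : V → V → Prop) (a : ℕ) : Prop :=
  ∀ l, 1 ≤ l → l ≤ a → HasCycleOfLength A (2 * l)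

/-- A digraph is pancyclic: cycles of all lengths `2, …, n`. -/
def Pancyclic [Fintype V] (A : V → V → Prop) : Prop :=
  ∀ l, 2 ≤ l → l ≤ Fintype.card V → HasCycleOfLength A l

/-- A cycle factor: a spanning collection of vertex-disjoint directed cycles,
i.e. a permutation `σ` with `v → σ v` an arc for every `v` (in a loopless
digraph all orbits have length `≥ 2`). -/
def HasCycleFactor (A : V → V → Prop) : Prop :=
  ∃ σ : Equiv.Perm V, ∀ v, A v (σ v)

/-- `arcs(S,T) = |A[S,T]| + |A[T,S]|`. -/
noncomputable def arcsCount (A : V → V → Prop) (S T : Set V) : ℕ :=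
  {p : V × V | p.1 ∈ S ∧ p.2 ∈ T ∧ A p.1 p.2}.ncard +
  {p : V × V | p.1 ∈ T ∧ p.2 ∈ S ∧ A p.1 p.2}.ncard

/-!
Suppose some vertex `u` has `d(u) ≤ a`. A vertex of degree `≤ a` lies in no dominating pair, since
every degree is at most `2a`. If `p → w` with `d(p) ≤ a` but `d(w) > a`, then `p` is the only
in-neighbour of `w`, so `w` dominates the whole opposite side; every other vertex `y` on the side of
`w` then forms a dominating pair with `w`, forcing `d(y) ≥ 2a` and hence `p → y`, so `d(p) > a`.
Thus degree `≤ a` propagates along arcs, and by strong connectivity every vertex lies in no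
dominating pair. Then every vertex has exactly one in-neighbour and at least one out-neighbour, so
the arcs are those of a permutation, which strong connectivity makes a single cycle: `D` is
Hamiltonian.
-/

variable {A : V → V → Prop}

namespace IsBipartition

variable {X Y : Set V} {a : ℕ} {v w : V}

theorem symm (h : IsBipartition A X Y) : IsBipartition A Y X :=
  ⟨h.1.symm, Set.union_comm X Y ▸ h.2.1, fun u v huv => (h.2.2 u v huv).symm⟩

theorem mem_or_mem (h : IsBipartition A X Y) (v : V) : v ∈ X ∨ v ∈ Y :=
  (Set.mem_union v X Y).1 (h.2.1 ▸ Set.mem_univ v)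

theorem outNbrs_subset (h : IsBipartition A X Y) (hv : v ∈ X) : {w | A v w} ⊆ Y := fun w hw =>
  (h.2.2 v w hw).elim And.right fun hvw => (Set.disjoint_left.1 h.1 hv hvw.1).elim

theorem inNbrs_subset (h : IsBipartition A X Y) (hv : v ∈ X) : {w | A w v} ⊆ Y := fun w hw =>
  (h.2.2 w v hw).elim (fun hwv => (Set.disjoint_left.1 h.1 hv hwv.2).elim) And.left

variable [Finite V]

theorem outDeg_le (h : IsBipartition A X Y) (hY : Y.ncard = a) (hv : v ∈ X) : outDeg A v ≤ a :=
  hY ▸ Set.ncard_le_ncard (h.outNbrs_subset hv)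

theorem inDeg_le (h : IsBipartition A X Y) (hY : Y.ncard = a) (hv : v ∈ X) : inDeg A v ≤ a :=
  hY ▸ Set.ncard_le_ncard (h.inNbrs_subset hv)

theorem deg_le (h : IsBipartition A X Y) (hX : X.ncard = a) (hY : Y.ncard = a) (v : V) :
    deg A v ≤ 2 * a := by
  rcases h.mem_or_mem v with hv | hv
  · have := h.outDeg_le hY hv; have := h.inDeg_le hY hv; unfold deg; omega
  · have := h.symm.outDeg_le hX hv; have := h.symm.inDeg_le hX hv; unfold deg; omega

theorem arc_of_le_outDeg (h : IsBipartition A X Y) (hY : Y.ncard = a) (hv : v ∈ X)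
    (hdv : a ≤ outDeg A v) (hw : w ∈ Y) : A v w := by
  have : {w | A v w} = Y := Set.eq_of_subset_of_ncard_le (h.outNbrs_subset hv) (hY ▸ hdv)
  exact this.symm.subset hw

theorem arc_of_le_inDeg (h : IsBipartition A X Y) (hY : Y.ncard = a) (hv : v ∈ X)
    (hdv : a ≤ inDeg A v) (hw : w ∈ Y) : A w v := by
  have : {w | A w v} = Y := Set.eq_of_subset_of_ncard_le (h.inNbrs_subset hv) (hY ▸ hdv)
  exact this.symm.subset hw

theorem nontrivial [Nonempty V] (h : IsBipartition A X Y) (hXY : X.ncard = Y.ncard) :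
    Nontrivial V := by
  obtain ⟨v⟩ := ‹Nonempty V›
  suffices ∀ {X Y : Set V}, IsBipartition A X Y → X.ncard = Y.ncard → v ∈ X → Nontrivial V from
    (h.mem_or_mem v).elim (this h hXY) (this h.symm hXY.symm)
  intro X Y h hXY hv
  obtain ⟨w, hw⟩ : Y.Nonempty := by
    rw [← Set.ncard_pos, ← hXY]; exact (Set.ncard_pos).2 ⟨v, hv⟩
  exact ⟨v, w, fun hvw => Set.disjoint_left.1 h.1 hv (hvw ▸ hw)⟩

end IsBipartition

theorem StronglyConnected.exists_arc_from [Nontrivial V] (hsc : StronglyConnected A) (v : V) :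
    ∃ w, A v w := by
  obtain ⟨w, hvw⟩ := exists_ne v
  rcases (hsc v w).cases_head with rfl | ⟨w', hvw', -⟩
  exacts [(hvw rfl).elim, ⟨w', hvw'⟩]

theorem StronglyConnected.exists_arc_to [Nontrivial V] (hsc : StronglyConnected A) (v : V) :
    ∃ w, A w v := by
  obtain ⟨w, hvw⟩ := exists_ne v
  rcases (hsc w v).cases_tail with rfl | ⟨w', -, hwv⟩
  exacts [(hvw rfl).elim, ⟨w', hwv⟩]

theorem exists_perm_arc_iff [Finite V] (hout : ∀ v, ∃ w, A v w)
    (hin : ∀ u v w, A u w → A v w → u = v) : ∃ σ : Equiv.Perm V, ∀ v w, A v w ↔ σ v = w := by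
  choose f hf using hout
  have hinj : Injective f := fun u v huv => hin u v (f v) (huv ▸ hf u) (hf v)
  let σ := Equiv.ofBijective f hinj.bijective_of_finite
  refine ⟨σ, fun v w => ⟨fun hvw => ?_, fun hvw => hvw ▸ hf v⟩⟩
  have hw : A (σ.symm w) w := by
    convert hf (σ.symm w); exact (σ.apply_symm_apply w).symm
  rw [hin v _ w hvw hw, σ.apply_symm_apply]

theorem isHamiltonian_of_zmod_equiv [Fintype V] {n : ℕ} (e : ZMod n ≃ V)
    (he : ∀ i, A (e i) (e (i + 1))) : IsHamiltonian A := by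
  obtain rfl : Fintype.card V = n := by
    rw [← Nat.card_eq_fintype_card, ← Nat.card_congr e, Nat.card_zmod]
  exact ⟨e, he⟩

theorem StronglyConnected.isHamiltonian_of_perm [Fintype V] (hsc : StronglyConnected A)
    (σ : Equiv.Perm V) (hσ : ∀ v w, A v w ↔ σ v = w) (u : V) : IsHamiltonian A := by
  have horbit : ∀ z, z ∈ MulAction.orbit (Subgroup.zpowers σ) u := by
    intro z
    induction hsc u z with
    | refl => exact MulAction.mem_orbit_self u
    | tail _ hvw ih =>
      obtain ⟨g, rfl⟩ := ih
      exact ⟨⟨σ, Subgroup.mem_zpowers σ⟩ * g, by simpa [mul_smul] using (hσ _ _).1 hvw⟩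
  let e := (MulAction.orbitZPowersEquiv σ u).symm.trans (Equiv.subtypeUnivEquiv horbit)
  refine isHamiltonian_of_zmod_equiv e fun i => (hσ _ _).2 ?_
  obtain ⟨k, rfl⟩ := ZMod.intCast_surjective i
  rw [← Int.cast_one, ← Int.cast_add, add_comm]
  simp only [e, Equiv.trans_apply, MulAction.orbitZPowersEquiv_symm_apply', zpow_add, zpow_one,
    mul_smul]
  rfl

section DominatingPairCondition

variable [Finite V] {X Y : Set V} {a : ℕ} {p q w : V}

theorem eq_of_arc_of_arc_of_deg_le (hbip : IsBipartition A X Y) (hX : X.ncard = a)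
    (hY : Y.ncard = a) (hdeg : ∀ u v, IsDominatingPair A u v → 3 * a + 1 ≤ deg A u + deg A v)
    (hdp : deg A p ≤ a) (hpw : A p w) (hqw : A q w) : q = p := by
  by_contra hqp
  have := hdeg q p ⟨hqp, w, hqw, hpw⟩
  have := hbip.deg_le hX hY q
  omega

theorem deg_le_of_arc_of_mem (hbip : IsBipartition A X Y) (hX : X.ncard = a)
    (hY : Y.ncard = a) (hdeg : ∀ u v, IsDominatingPair A u v → 3 * a + 1 ≤ deg A u + deg A v)
    (hout : ∀ v, ∃ w, A v w) (hp : p ∈ X) (hpin : ∃ q, A q p) (hdp : deg A p ≤ a)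
    (hpw : A p w) : deg A w ≤ a := by
  by_contra! hdw
  have hwY := hbip.outNbrs_subset hp hpw
  have hinw : inDeg A w ≤ 1 := Set.ncard_singleton p ▸ Set.ncard_le_ncard
    fun q hqw => eq_of_arc_of_arc_of_deg_le hbip hX hY hdeg hdp hpw hqw
  have houtw : a ≤ outDeg A w := by unfold deg at hdw; omega
  have hpY : Y ⊆ {y | A p y} := by
    intro y hy
    obtain rfl | hyw := eq_or_ne y w
    · exact hpw
    obtain ⟨z, hyz⟩ := hout y
    have hwz := hbip.symm.arc_of_le_outDeg hX hwY houtw (hbip.symm.outNbrs_subset hy hyz)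
    have := hdeg w y ⟨hyw.symm, z, hwz, hyz⟩
    have := hbip.symm.outDeg_le hX hy
    have := hbip.symm.outDeg_le hX hwY
    exact hbip.symm.arc_of_le_inDeg hX hy (by unfold deg at *; omega) hp
  have : a ≤ outDeg A p := hY ▸ Set.ncard_le_ncard hpY
  have : 0 < inDeg A p := (Set.ncard_pos).2 hpin
  unfold deg at hdp
  omega

theorem forall_deg_le_of_deg_le [Nontrivial V] (hbip : IsBipartition A X Y) (hX : X.ncard = a)
    (hY : Y.ncard = a) (hdeg : ∀ u v, IsDominatingPair A u v → 3 * a + 1 ≤ deg A u + deg A v)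
    (hsc : StronglyConnected A) {u : V} (hu : deg A u ≤ a) (v : V) : deg A v ≤ a := by
  induction hsc u v with
  | refl => exact hu
  | @tail p w _ hpw ih =>
    have hpin := hsc.exists_arc_to p
    rcases hbip.mem_or_mem p with hp | hp
    · exact deg_le_of_arc_of_mem hbip hX hY hdeg hsc.exists_arc_from hp hpin ih hpw
    · exact deg_le_of_arc_of_mem hbip.symm hY hX hdeg hsc.exists_arc_from hp hpin ih hpw

end DominatingPairCondition

theorem stmt_5_general {V : Type*} [Fintype V] (A : V → V → Prop) (a : ℕ) (X Y : Set V)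
    (hbip : IsBipartition A X Y) (hX : X.ncard = a) (hY : Y.ncard = a)
    (hsc : StronglyConnected A)
    (hdeg : ∀ u v : V, IsDominatingPair A u v → 3 * a + 1 ≤ deg A u + deg A v)
    (hnh : ¬ IsHamiltonian A) :
    ∀ u : V, a + 1 ≤ deg A u := by
  intro u
  by_contra! hu
  have : Nonempty V := ⟨u⟩
  have : Nontrivial V := hbip.nontrivial (hX.trans hY.symm)
  have hall := forall_deg_le_of_deg_le hbip hX hY hdeg hsc (Nat.le_of_lt_succ hu)
  obtain ⟨σ, hσ⟩ := exists_perm_arc_iff hsc.exists_arc_from fun p q w hpw hqw =>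
    eq_of_arc_of_arc_of_deg_le hbip hX hY hdeg (hall q) hqw hpw
  exact hnh (hsc.isHamiltonian_of_perm σ hσ u)

/-- in a non-Hamiltonian such digraph every vertex has degree `≥ a+1`. -/
theorem stmt_5 {V : Type*} [Fintype V] (A : V → V → Prop) (a : ℕ) (X Y : Set V)
    (ha : 2 ≤ a) (hcard : Fintype.card V = 2 * a)
    (hbip : IsBipartition A X Y) (hX : X.ncard = a) (hY : Y.ncard = a)
    (hsc : StronglyConnected A)
    (hdeg : ∀ u v : V, IsDominatingPair A u v → 3 * a + 1 ≤ deg A u + deg A v)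
    (hnh : ¬ IsHamiltonian A) :
    ∀ u : V, a + 1 ≤ deg A u :=
  stmt_5_general A a X Y hbip hX hY hsc hdeg hnh
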